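/- Let S be a measurable space, κ a Markov kernel from S to S, ρ₀ a probability measure on S, and γ ∈ ℝ≥0∞ with γ < 1. Define measures μ_t on S by μ₀ = ρ₀ and μ_{t+1} = μ_t.bind κ, and let d = ∑_{t=0}^{∞} ((1−γ)·γ^t) • μ_t. Define the restart kernel κ_γ from S to S by κ_γ(s) = (1−γ) • ρ₀ + γ • κ(s). Then d is a probability measure on S and d is invariant for the restart kernel: d.bind κ_γ = d. -/

import Mathlib

/-!
Split off the `t = 0` term of `d = ∑ₜ (1 - γ) γᵗ μₜ`: it is `(1 - γ) ρ₀`, and the remaining terms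
form `γ ∑ₜ (1 - γ) γᵗ μₜ₊₁ = γ (d.bind κ)`. Since `d` has mass `(1 - γ) ∑ₜ γᵗ = 1`, this is exactly
`d.bind κ_γ = (1 - γ) d(S) ρ₀ + γ (d.bind κ)`.
-/

open MeasureTheory ProbabilityTheory
open scoped ENNReal

namespace MeasureTheory.Measure

variable {S : Type*} [MeasurableSpace S]

theorem sum_nat_eq_add_sum_succ (μ : ℕ → Measure S) :
    Measure.sum μ = μ 0 + Measure.sum fun t => μ (t + 1) := by
  ext A hA
  rw [add_apply, sum_apply _ hA, sum_apply _ hA, tsum_eq_zero_add' ENNReal.summable]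

theorem smul_sum {ι : Type*} (c : ℝ≥0∞) (μ : ι → Measure S) :
    c • Measure.sum μ = Measure.sum fun i => c • μ i := by
  ext A hA
  simp only [smul_apply, sum_apply _ hA, smul_eq_mul, ENNReal.tsum_mul_left]

theorem bind_const_smul_add_smul {T : Type*} [MeasurableSpace T] (ν : Measure S) (ρ : Measure T)
    (κ : Kernel S T) (a b : ℝ≥0∞) :
    ν.bind (fun s => a • ρ + b • κ s) = (a * ν Set.univ) • ρ + b • ν.bind κ := by
  have hmeas : Measurable fun s => a • ρ + b • κ s :=
    measurable_of_measurable_coe _ fun A hA => by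
      simp only [add_apply, smul_apply, smul_eq_mul]
      exact measurable_const.add ((κ.measurable_coe hA).const_mul b)
  ext A hA
  simp only [bind_apply hA hmeas.aemeasurable, bind_apply hA κ.aemeasurable, add_apply,
    smul_apply, smul_eq_mul]
  rw [lintegral_add_left measurable_const, lintegral_const,
    lintegral_const_mul _ (κ.measurable_coe hA)]
  ring

end MeasureTheory.Measure

section DiscountedVisitation

variable {S : Type*} [MeasurableSpace S]

theorem isProbabilityMeasure_of_succ_eq_bind (κ : Kernel S S) [IsMarkovKernel κ]
    (μ : ℕ → Measure S) [IsProbabilityMeasure (μ 0)] (hμ : ∀ t, μ (t + 1) = (μ t).bind κ) :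
    ∀ t, IsProbabilityMeasure (μ t)
  | 0 => inferInstance
  | t + 1 => by
    have := isProbabilityMeasure_of_succ_eq_bind κ μ hμ t
    rw [hμ t]
    infer_instance

theorem isProbabilityMeasure_sum_geometric_smul {γ : ℝ≥0∞} (hγ : γ < 1) (μ : ℕ → Measure S)
    [∀ t, IsProbabilityMeasure (μ t)] :
    IsProbabilityMeasure (Measure.sum fun t => ((1 - γ) * γ ^ t) • μ t) := by
  constructor
  simp only [Measure.sum_apply _ MeasurableSet.univ, Measure.smul_apply, measure_univ,
    smul_eq_mul, mul_one]
  rw [ENNReal.tsum_mul_left, ENNReal.tsum_geometric,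
    ENNReal.mul_inv_cancel (tsub_pos_of_lt hγ).ne' (ENNReal.sub_ne_top ENNReal.one_ne_top)]

end DiscountedVisitation

theorem stmt_16 (S : Type*) [MeasurableSpace S]
    (κ : Kernel S S) [IsMarkovKernel κ]
    (ρ₀ : Measure S) [IsProbabilityMeasure ρ₀]
    (γ : ℝ≥0∞) (hγ : γ < 1)
    (μ : ℕ → Measure S) (hμ0 : μ 0 = ρ₀)
    (hμ : ∀ t, μ (t + 1) = (μ t).bind κ)
    (d : Measure S) (hd : d = Measure.sum (fun t => ((1 - γ) * γ ^ t) • μ t)) :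
    IsProbabilityMeasure d ∧
      d.bind (fun s => (1 - γ) • ρ₀ + γ • κ s) = d := by
  subst hμ0
  have := isProbabilityMeasure_of_succ_eq_bind κ μ hμ
  have hd_prob : IsProbabilityMeasure d := hd ▸ isProbabilityMeasure_sum_geometric_smul hγ μ
  refine ⟨hd_prob, ?_⟩
  have hd_bind : d.bind κ = Measure.sum fun t => ((1 - γ) * γ ^ t) • μ (t + 1) := by
    rw [hd, Measure.bind_sum _ _ κ.aemeasurable]
    simp only [Measure.bind_smul, hμ]
  rw [Measure.bind_const_smul_add_smul, measure_univ, mul_one, hd_bind, Measure.smul_sum]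
  conv_rhs => rw [hd, Measure.sum_nat_eq_add_sum_succ]
  simp only [pow_zero, mul_one, pow_succ, smul_smul, mul_comm γ, mul_assoc]
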